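/- arXiv:1609.09548 — 4 statements merged into one kernel-verified Lean document; each statement's English description precedes it below -/
import Mathlib

section
/- For the weighted generalized cost function: sum over t from 0 to n-1 of w(E_T(t)) * (f(t+1) - f(t)) equals the generalized hierarchical clustering cost sum over edges e={u,v} of w_e * f(r(u,v)), where f is any function with f(0) = 0. -/
/-- A rooted binary tree whose leaves are labelled by elements of `α`.
A hierarchical clustering of a vertex set is such a tree whose leaf set is the vertex set. -/
inductive HCTree (α : Type) where
  | leaf : α → HCTree α
  | node : HCTree α → HCTree α → HCTree α

namespace HCTree

variable {α : Type} [DecidableEq α]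

/-- The set of leaf labels of the tree. -/
def leaves : HCTree α → Finset α
  | leaf v => {v}
  | node l r => l.leaves ∪ r.leaves

/-- The leaf set of the minimal subtree of `T` containing both `u` and `v`
(i.e. the cluster at the lowest common ancestor of `u` and `v`). -/
def cluster : HCTree α → α → α → Finset α
  | leaf w, _, _ => {w}
  | node l r, u, v =>
    if u ∈ l.leaves ∧ v ∈ l.leaves then l.cluster u v
    else if u ∈ r.leaves ∧ v ∈ r.leaves then r.cluster u v
    else l.leaves ∪ r.leaves

/-- A tree is proper if its leaf labels are distinct, i.e. the leaf sets of the two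
children of every internal node are disjoint. -/
def proper : HCTree α → Prop
  | leaf _ => True
  | node l r => Disjoint l.leaves r.leaves ∧ l.proper ∧ r.proper

end HCTree

/-!
Expanding `w(E_T(t))` as a sum over edges and exchanging the two sums, each edge `e`
contributes `w e` times `∑_{t < r(e)} (f(t+1) - f(t))`, which telescopes to `f(r(e)) - f(0)`.
The truncation of the outer sum at `n` is harmless because every cluster has at most `n` leaves.
-/

open Finset

lemma HCTree.cluster_subset_leaves {α : Type} [DecidableEq α] (T : HCTree α) (u v : α) :
    T.cluster u v ⊆ T.leaves := by
  induction T with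
  | leaf w => simp [HCTree.cluster, HCTree.leaves]
  | node l r ihl ihr =>
    simp only [HCTree.cluster, HCTree.leaves]
    split_ifs
    · exact ihl.trans subset_union_left
    · exact ihr.trans subset_union_right
    · exact subset_rfl

lemma sum_range_ite_lt_sub {M : Type*} [AddCommGroup M] (f : ℕ → M) {r n : ℕ} (hrn : r ≤ n) :
    ∑ t ∈ range n, (if t < r then f (t + 1) - f t else 0) = f r - f 0 := by
  rw [← sum_filter, ← sum_range_sub]
  congr 1
  ext t
  simp only [mem_filter, mem_range]
  omega

lemma sum_range_sum_filter_lt_mul_sub {ι R : Type*} [CommRing R] (E : Finset ι) (w : ι → R)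
    (r : ι → ℕ) {n : ℕ} (hr : ∀ e ∈ E, r e ≤ n) (f : ℕ → R) (hf0 : f 0 = 0) :
    ∑ t ∈ range n, (∑ e ∈ E.filter (fun e => t < r e), w e) * (f (t + 1) - f t)
      = ∑ e ∈ E, w e * f (r e) := by
  calc ∑ t ∈ range n, (∑ e ∈ E.filter (fun e => t < r e), w e) * (f (t + 1) - f t)
      = ∑ e ∈ E, ∑ t ∈ range n, w e * (if t < r e then f (t + 1) - f t else 0) := by
        rw [sum_comm]
        refine sum_congr rfl fun t _ => ?_
        simp only [sum_mul, sum_filter, mul_ite, ite_mul, zero_mul, mul_zero]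
    _ = ∑ e ∈ E, w e * f (r e) := by
        refine sum_congr rfl fun e he => ?_
        rw [← mul_sum, sum_range_ite_lt_sub f (hr e he), hf0, sub_zero]

theorem hc_generalized_cost_eq_sum_of_levels_general {α : Type} [DecidableEq α]
    (T : HCTree α)
    (V : Finset α) (hV : T.leaves = V) (n : ℕ) (hn : n = V.card)
    (E : Finset (α × α))
    (w : α × α → ℝ)
    (f : ℕ → ℝ) (hf0 : f 0 = 0) :
    ∑ t ∈ Finset.range n,
        (∑ e ∈ E.filter (fun e => t < (T.cluster e.1 e.2).card), w e) * (f (t + 1) - f t)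
      = ∑ e ∈ E, w e * f (T.cluster e.1 e.2).card := by
  have hcard : ∀ e ∈ E, (T.cluster e.1 e.2).card ≤ n := fun e _ => by
    rw [hn, ← hV]
    exact card_le_card (T.cluster_subset_leaves e.1 e.2)
  exact sum_range_sum_filter_lt_mul_sub E w (fun e => (T.cluster e.1 e.2).card) hcard f hf0

/-- for a weighted graph and any `f` with `f 0 = 0`,
`∑_{t=0}^{n-1} w(E_T(t)) (f(t+1) - f(t)) = ∑_{e∈E} w_e f(r(e))`. -/
theorem hc_generalized_cost_eq_sum_of_levels {α : Type} [DecidableEq α]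
    (T : HCTree α) (hT : T.proper)
    (V : Finset α) (hV : T.leaves = V) (n : ℕ) (hn : n = V.card)
    (E : Finset (α × α)) (hE : ∀ e ∈ E, e.1 ∈ V ∧ e.2 ∈ V)
    (w : α × α → ℝ) (hw : ∀ e ∈ E, 0 ≤ w e)
    (f : ℕ → ℝ) (hf0 : f 0 = 0) :
    ∑ t ∈ Finset.range n,
        (∑ e ∈ E.filter (fun e => t < (T.cluster e.1 e.2).card), w e) * (f (t + 1) - f t)
      = ∑ e ∈ E, w e * f (T.cluster e.1 e.2).card :=
  hc_generalized_cost_eq_sum_of_levels_general T V hV n hn E w f hf0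
end

section
/- Charging inequality for RSC: for each cluster A in the tree split into parts of sizes s(A) <= |A| - s(A), the sum over all clusters A of sum over t from |A| - s(A) + 1 to |A| of |E_OPT(floor(t/2)) restricted to A| is at most sum over t from 1 to n of |E_OPT(floor(t/2))|. -/
namespace HCTree

variable {α : Type} [DecidableEq α]

/-- For each cluster `A` of the tree, split into children of sizes
`s(A) ≤ |A| - s(A)`, sum `∑_{t=|A|-s(A)+1}^{|A|} |E_OPT(⌊t/2⌋) ∩ A|`,
and add these charges over all clusters of the tree. -/
def chargeSum (Eopt : ℕ → Finset (α × α)) : HCTree α → ℕ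
  | leaf _ => 0
  | node l r =>
    (∑ t ∈ Finset.Icc ((l.leaves ∪ r.leaves).card - min l.leaves.card r.leaves.card + 1)
        (l.leaves ∪ r.leaves).card,
      ((Eopt (t / 2)).filter
        (fun e => e.1 ∈ l.leaves ∪ r.leaves ∧ e.2 ∈ l.leaves ∪ r.leaves)).card)
      + l.chargeSum Eopt + r.chargeSum Eopt

end HCTree

open Finset

section Arithmetic

variable {f g h : ℕ → ℕ}

theorem sum_Icc_add_sum_Icc_add_sum_Icc_le_of_le (hfg : ∀ t, f t + g t ≤ h t) {a b : ℕ}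
    (hab : a ≤ b) :
    ∑ t ∈ Icc (b + 1) (a + b), h t + ∑ t ∈ Icc 1 a, f t + ∑ t ∈ Icc 1 b, g t
      ≤ ∑ t ∈ Icc 1 (a + b), h t := by
  -- specialized to `ℕ` so that `simp` also matches the literal `1` as `0 + 1`
  have hIcc : ∀ m n : ℕ, Icc (m + 1) n = Ioc m n := Icc_add_one_left_eq_Ioc
  simp only [hIcc]
  rw [← sum_Ioc_consecutive h (Nat.zero_le b) (Nat.le_add_left b a),
    ← sum_Ioc_consecutive h (Nat.zero_le a) hab,
    ← sum_Ioc_consecutive g (Nat.zero_le a) hab]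
  have h_low : ∑ t ∈ Ioc 0 a, f t + ∑ t ∈ Ioc 0 a, g t ≤ ∑ t ∈ Ioc 0 a, h t := by
    rw [← sum_add_distrib]
    exact sum_le_sum fun t _ => hfg t
  have h_mid : ∑ t ∈ Ioc a b, g t ≤ ∑ t ∈ Ioc a b, h t :=
    sum_le_sum fun t _ => (Nat.le_add_left _ _).trans (hfg t)
  omega

theorem sum_Icc_add_sum_Icc_add_sum_Icc_le (hfg : ∀ t, f t + g t ≤ h t) (a b : ℕ) :
    ∑ t ∈ Icc (a + b - min a b + 1) (a + b), h t + ∑ t ∈ Icc 1 a, f t + ∑ t ∈ Icc 1 b, g t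
      ≤ ∑ t ∈ Icc 1 (a + b), h t := by
  rcases le_total a b with hab | hba
  · rw [min_eq_left hab, Nat.add_sub_cancel_left]
    exact sum_Icc_add_sum_Icc_add_sum_Icc_le_of_le hfg hab
  · rw [min_eq_right hba, Nat.add_sub_cancel, add_assoc, add_comm (∑ t ∈ Icc 1 a, f t),
      ← add_assoc, add_comm a b]
    exact sum_Icc_add_sum_Icc_add_sum_Icc_le_of_le (fun t => (add_comm _ _).trans_le (hfg t)) hba

end Arithmetic

section InducedEdges

variable {α : Type} [DecidableEq α]

def inducedEdges (E : Finset (α × α)) (S : Finset α) : Finset (α × α) :=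
  E.filter fun e => e.1 ∈ S ∧ e.2 ∈ S

theorem card_inducedEdges_add_card_inducedEdges_le (E : Finset (α × α)) {S S' : Finset α}
    (hSS' : Disjoint S S') :
    #(inducedEdges E S) + #(inducedEdges E S') ≤ #(inducedEdges E (S ∪ S')) := by
  have hdisj : Disjoint (inducedEdges E S) (inducedEdges E S') :=
    disjoint_filter.2 fun _ _ hS hS' => disjoint_left.1 hSS' hS.1 hS'.1
  rw [← card_union_of_disjoint hdisj]
  refine card_le_card (union_subset ?_ ?_) <;>
    intro e he <;> simp only [inducedEdges, mem_filter, mem_union] at he ⊢ <;> tauto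

end InducedEdges

namespace HCTree

variable {α : Type} [DecidableEq α]

theorem chargeSum_node (E : ℕ → Finset (α × α)) (l r : HCTree α) :
    (node l r).chargeSum E =
      ∑ t ∈ Icc (#(l.leaves ∪ r.leaves) - min #l.leaves #r.leaves + 1) #(l.leaves ∪ r.leaves),
          #(inducedEdges (E (t / 2)) (l.leaves ∪ r.leaves))
        + l.chargeSum E + r.chargeSum E :=
  rfl

theorem chargeSum_le_sum_card_inducedEdges (E : ℕ → Finset (α × α)) :
    ∀ T : HCTree α, T.proper →
      T.chargeSum E ≤ ∑ t ∈ Icc 1 #T.leaves, #(inducedEdges (E (t / 2)) T.leaves)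
  | leaf _, _ => by simp [chargeSum]
  | node l r, ⟨hdisj, hl, hr⟩ => by
    have ih_l := chargeSum_le_sum_card_inducedEdges E l hl
    have ih_r := chargeSum_le_sum_card_inducedEdges E r hr
    have h_split := sum_Icc_add_sum_Icc_add_sum_Icc_le
      (fun t => card_inducedEdges_add_card_inducedEdges_le (E (t / 2)) hdisj)
      #l.leaves #r.leaves
    rw [← card_union_of_disjoint hdisj] at h_split
    rw [chargeSum_node, leaves]
    omega

end HCTree

theorem charging_inequality_general {α : Type} [DecidableEq α]
    (T : HCTree α) (hT : T.proper)
    (V : Finset α) (hV : T.leaves = V) (n : ℕ) (hn : n = V.card)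
    (Eopt : ℕ → Finset (α × α)) :
    T.chargeSum Eopt ≤ ∑ t ∈ Finset.Icc 1 n, (Eopt (t / 2)).card := by
  subst hn hV
  calc T.chargeSum Eopt
      ≤ ∑ t ∈ Icc 1 #T.leaves, #(inducedEdges (Eopt (t / 2)) T.leaves) :=
        T.chargeSum_le_sum_card_inducedEdges Eopt hT
    _ ≤ ∑ t ∈ Icc 1 #T.leaves, #(Eopt (t / 2)) :=
        sum_le_sum fun _ _ => card_le_card (filter_subset _ _)

/-- charging inequality for recursive sparsest cut. For a decreasing
family of edge sets `E_OPT(·)`, summing over all clusters `A` of the tree the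
quantity `∑_{t=|A|-s(A)+1}^{|A|} |E_OPT(⌊t/2⌋) ∩ A|` is at most
`∑_{t=1}^{n} |E_OPT(⌊t/2⌋)|`. -/
theorem charging_inequality {α : Type} [DecidableEq α]
    (T : HCTree α) (hT : T.proper)
    (V : Finset α) (hV : T.leaves = V) (n : ℕ) (hn : n = V.card)
    (Eopt : ℕ → Finset (α × α))
    (hdec : ∀ t t' : ℕ, t ≤ t' → Eopt t' ⊆ Eopt t)
    (hEV : ∀ t, ∀ e ∈ Eopt t, e.1 ∈ V ∧ e.2 ∈ V) :
    T.chargeSum Eopt ≤ ∑ t ∈ Finset.Icc 1 n, (Eopt (t / 2)).card :=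
  charging_inequality_general T hT V hV n hn Eopt
end

section
/- For any hierarchical clustering tree T of graph G and the linear ordering pi of the vertices induced by the left-to-right order of the leaves of T, for every edge {u,v}: |pi(u) - pi(v)| <= |leaves(T[u v v])|, i.e., the linear arrangement stretch of each edge is at most the number of leaves of the minimal subtree containing both endpoints. Consequently the minimum linear arrangement cost of G is at most the hierarchical clustering cost of T. -/
/-!
Inside the left subtree of a node, planar positions are the positions in that subtree; inside the
right subtree they are all shifted by the number of leaves on the left. So if `u` and `v` lie in a
common child, their distance is the distance inside that child; otherwise both positions lie in the
node's own block of consecutive positions, whose length is the size of the cluster at the lowest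
common ancestor of `u` and `v`. The planar order is itself a linear arrangement, so its cost
bounds the minimum.
-/

theorem List.bijOn_idxOf_add_one {β : Type*} [DecidableEq β] {l : List β} (hl : l.Nodup) :
    Set.BijOn (fun x => l.idxOf x + 1) {x | x ∈ l} (Set.Icc 1 l.length) := by
  refine ⟨fun x hx => ?_, fun x hx y _ hxy => ?_, fun k hk => ?_⟩
  · have := List.idxOf_lt_length_iff.mpr hx
    simp only [Set.mem_Icc]
    omega
  · exact (List.idxOf_inj hx).mp (by simpa using hxy)
  · obtain ⟨hk1, hkl⟩ := hk
    have hlt : k - 1 < l.length := by omega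
    refine ⟨l[k - 1], List.getElem_mem hlt, ?_⟩
    simp only [hl.idxOf_getElem]
    omega

namespace HCTree

variable {α : Type} [DecidableEq α]

/-- The left-to-right list of leaves of the tree (its planar embedding order). -/
def leafList : HCTree α → List α
  | leaf v => [v]
  | node l r => l.leafList ++ r.leafList

theorem mem_leafList {T : HCTree α} {v : α} : v ∈ T.leafList ↔ v ∈ T.leaves := by
  induction T with
  | leaf w => simp [leafList, leaves]
  | node l r ihl ihr => simp [leafList, leaves, ihl, ihr]

theorem nodup_leafList {T : HCTree α} (hT : T.proper) : T.leafList.Nodup := by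
  induction T with
  | leaf w => simp [leafList]
  | node l r ihl ihr =>
    obtain ⟨hd, hl, hr⟩ := hT
    exact (ihl hl).append (ihr hr) fun a ha hb =>
      Finset.disjoint_left.mp hd (mem_leafList.mp ha) (mem_leafList.mp hb)

theorem length_leafList {T : HCTree α} (hT : T.proper) :
    T.leafList.length = T.leaves.card := by
  rw [← List.toFinset_card_of_nodup (nodup_leafList hT)]
  congr
  ext v
  simp [mem_leafList]

theorem idxOf_leafList_lt_card {T : HCTree α} (hT : T.proper) {v : α} (hv : v ∈ T.leaves) :
    T.leafList.idxOf v < T.leaves.card :=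
  length_leafList hT ▸ List.idxOf_lt_length_iff.mpr (mem_leafList.mpr hv)

theorem bijOn_idxOf_leafList_add_one {T : HCTree α} (hT : T.proper) :
    Set.BijOn (fun v => T.leafList.idxOf v + 1) T.leaves (Set.Icc 1 T.leaves.card) := by
  have hset : (T.leaves : Set α) = {v | v ∈ T.leafList} := by
    ext v
    simp [mem_leafList]
  rw [hset, ← length_leafList hT]
  exact List.bijOn_idxOf_add_one (nodup_leafList hT)

theorem natAbs_idxOf_leafList_sub_le_card_cluster {T : HCTree α} (hT : T.proper) {u v : α}
    (hu : u ∈ T.leaves) (hv : v ∈ T.leaves) :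
    ((T.leafList.idxOf u : ℤ) - T.leafList.idxOf v).natAbs ≤ (T.cluster u v).card := by
  induction T with
  | leaf w =>
    simp only [leaves, Finset.mem_singleton] at hu hv
    simp [hu, hv]
  | node l r ihl ihr =>
    obtain ⟨hd, hl, hr⟩ := id hT
    rw [cluster]
    split_ifs with hleft hright
    · rw [leafList, List.idxOf_append_of_mem (mem_leafList.mpr hleft.1),
        List.idxOf_append_of_mem (mem_leafList.mpr hleft.2)]
      exact ihl hl hleft.1 hleft.2
    · have not_left {x : α} (hx : x ∈ r.leaves) : x ∉ l.leafList := fun h =>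
        Finset.disjoint_left.mp hd (mem_leafList.mp h) hx
      rw [leafList, List.idxOf_append_of_notMem (not_left hright.1),
        List.idxOf_append_of_notMem (not_left hright.2)]
      simpa using ihr hr hright.1 hright.2
    · have := idxOf_leafList_lt_card hT hu
      have := idxOf_leafList_lt_card hT hv
      rw [leaves] at *
      omega

end HCTree

/-- for the linear ordering `π` of the vertices induced by the
left-to-right order of the leaves of `T`, every edge `{u,v}` satisfies
`|π(u) - π(v)| ≤ |leaves(T[u ∨ v])|`; consequently the minimum linear arrangement
cost of `G` is at most the hierarchical clustering cost of `T`. -/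
theorem linear_arrangement_le_hc_cost {α : Type} [DecidableEq α]
    (T : HCTree α) (hT : T.proper)
    (V : Finset α) (hV : T.leaves = V) (n : ℕ) (hn : n = V.card)
    (E : Finset (α × α)) (hE : ∀ e ∈ E, e.1 ∈ V ∧ e.2 ∈ V)
    (π : α → ℕ) (hπ : ∀ v, π v = T.leafList.idxOf v + 1) :
    (∀ e ∈ E, ((π e.1 : ℤ) - (π e.2 : ℤ)).natAbs ≤ (T.cluster e.1 e.2).card) ∧
    ∃ σ : α → ℕ, Set.BijOn σ (↑V) (Set.Icc 1 n) ∧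
      ∑ e ∈ E, ((σ e.1 : ℤ) - (σ e.2 : ℤ)).natAbs
        ≤ ∑ e ∈ E, (T.cluster e.1 e.2).card := by
  subst hV hn
  have stretch_le : ∀ e ∈ E, ((π e.1 : ℤ) - π e.2).natAbs ≤ (T.cluster e.1 e.2).card :=
    fun e he => by
      simpa [hπ] using T.natAbs_idxOf_leafList_sub_le_card_cluster hT (hE e he).1 (hE e he).2
  have hbij : Set.BijOn π T.leaves (Set.Icc 1 T.leaves.card) := by
    simpa only [← hπ] using HCTree.bijOn_idxOf_leafList_add_one hT
  exact ⟨stretch_le, π, hbij, Finset.sum_le_sum stretch_le⟩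
end

section
/- Validity of the spreading constraint for ultrametrics from trees: for any rooted binary tree T with leaf set V, defining l(u,v) = |leaves(T[u ∨ v])| for distinct leaves u, v, for every subset U of V and every v in U: sum over u in U of l(u,v) >= (|U|^2 - 1)/2 (with l(v,v) = 0). -/
/-!
For a fixed leaf `v` of a proper tree, the clusters `T.cluster u v` form a chain. Hence the ball
`{u : #(T.cluster u v) ≤ m}`, together with `v`, lies inside a single cluster of size at most `m`,
so the values `#(T.cluster u v)` for `u ∈ U \ {v}`, sorted increasingly, are at least
`2, 3, …, #U`. Their sum is therefore at least `(#U - 1)(#U + 2)/2 ≥ (#U² - 1)/2`.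
-/

namespace HCTree

variable {α : Type} [DecidableEq α]

lemma cluster_subset_leaves_s11 (T : HCTree α) (u v : α) : T.cluster u v ⊆ T.leaves := by
  induction T with
  | leaf w => simp [cluster, leaves]
  | node l r ihl ihr =>
    simp only [cluster, leaves]
    split_ifs
    · exact ihl.trans Finset.subset_union_left
    · exact ihr.trans Finset.subset_union_right
    · exact subset_rfl

lemma mem_cluster {T : HCTree α} (hT : T.proper) {u v : α}
    (hu : u ∈ T.leaves) (hv : v ∈ T.leaves) :
    u ∈ T.cluster u v ∧ v ∈ T.cluster u v := by
  induction T with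
  | leaf w =>
    simp only [leaves, Finset.mem_singleton] at hu hv
    simp [cluster, hu, hv]
  | node l r ihl ihr =>
    obtain ⟨-, hl, hr⟩ := hT
    simp only [cluster]
    split_ifs with hul hur
    · exact ihl hl hul.1 hul.2
    · exact ihr hr hur.1 hur.2
    · exact ⟨hu, hv⟩

lemma cluster_node_of_mem_left {l r : HCTree α} (hd : Disjoint l.leaves r.leaves)
    {u v : α} (hv : v ∈ l.leaves) :
    (node l r).cluster u v = if u ∈ l.leaves then l.cluster u v else (node l r).leaves := by
  have hvr : v ∉ r.leaves := Finset.disjoint_left.mp hd hv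
  by_cases hu : u ∈ l.leaves <;> simp [cluster, leaves, hu, hv, hvr]

lemma cluster_node_of_mem_right {l r : HCTree α} (hd : Disjoint l.leaves r.leaves)
    {u v : α} (hv : v ∈ r.leaves) :
    (node l r).cluster u v = if u ∈ r.leaves then r.cluster u v else (node l r).leaves := by
  have hvl : v ∉ l.leaves := Finset.disjoint_right.mp hd hv
  by_cases hu : u ∈ r.leaves <;> simp [cluster, leaves, hu, hv, hvl]

lemma cluster_subset_or_subset {T : HCTree α} (hT : T.proper) {u u' v : α}
    (hv : v ∈ T.leaves) :
    T.cluster u v ⊆ T.cluster u' v ∨ T.cluster u' v ⊆ T.cluster u v := by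
  induction T with
  | leaf w => simp [cluster]
  | node l r ihl ihr =>
    obtain ⟨hd, hl, hr⟩ := hT
    rcases Finset.mem_union.mp hv with hvl | hvr
    · rw [cluster_node_of_mem_left hd hvl, cluster_node_of_mem_left hd hvl]
      have hsub (x : α) : l.cluster x v ⊆ (node l r).leaves :=
        (l.cluster_subset_leaves_s11 x v).trans Finset.subset_union_left
      split_ifs
      exacts [ihl hl hvl, .inl (hsub u), .inr (hsub u'), .inl subset_rfl]
    · rw [cluster_node_of_mem_right hd hvr, cluster_node_of_mem_right hd hvr]
      have hsub (x : α) : r.cluster x v ⊆ (node l r).leaves :=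
        (r.cluster_subset_leaves_s11 x v).trans Finset.subset_union_right
      split_ifs
      exacts [ihr hr hvr, .inl (hsub u), .inr (hsub u'), .inl subset_rfl]

lemma mem_cluster_of_card_le {T : HCTree α} (hT : T.proper) {u x v : α}
    (hx : x ∈ T.leaves) (hv : v ∈ T.leaves)
    (hcard : (T.cluster x v).card ≤ (T.cluster u v).card) :
    x ∈ T.cluster u v := by
  have hxx := (mem_cluster hT hx hv).1
  rcases cluster_subset_or_subset hT (u := x) (u' := u) hv with hsub | hsub
  · exact hsub hxx
  · rwa [← Finset.eq_of_subset_of_card_le hsub hcard] at hxx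

lemma card_filter_card_cluster_le_lt {T : HCTree α} (hT : T.proper) {S : Finset α}
    (hS : S ⊆ T.leaves) {v : α} (hv : v ∈ T.leaves) (hvS : v ∉ S) {u : α}
    (hu : u ∈ S) :
    (S.filter fun x => (T.cluster x v).card ≤ (T.cluster u v).card).card
      < (T.cluster u v).card := by
  set B := S.filter fun x => (T.cluster x v).card ≤ (T.cluster u v).card
  have hball : insert v B ⊆ T.cluster u v := by
    intro x hx
    rcases Finset.mem_insert.mp hx with rfl | hxB
    · exact (mem_cluster hT (hS hu) hv).2
    · obtain ⟨hxS, hxu⟩ := Finset.mem_filter.mp hxB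
      exact mem_cluster_of_card_le hT (hS hxS) hv hxu
  have hvB : v ∉ B := fun h => hvS (Finset.mem_filter.mp h).1
  simpa [Finset.card_insert_of_notMem hvB] using Finset.card_le_card hball

end HCTree

lemma Finset.card_mul_card_add_three_le_two_mul_sum {ι : Type*} [DecidableEq ι] (S : Finset ι)
    (f : ι → ℕ) (h : ∀ u ∈ S, (S.filter fun x => f x ≤ f u).card < f u) :
    S.card * (S.card + 3) ≤ 2 * ∑ u ∈ S, f u := by
  induction S using Finset.induction_on_max_value f with
  | empty => simp
  | insert a s ha hmax ih =>
    have hs : ∀ u ∈ s, (s.filter fun x => f x ≤ f u).card < f u := fun u hu =>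
      (Finset.card_le_card (Finset.filter_subset_filter _ (Finset.subset_insert a s))).trans_lt
        (h u (Finset.mem_insert_of_mem hu))
    have hfa : s.card + 1 < f a := by
      have := h a (Finset.mem_insert_self a s)
      rwa [Finset.filter_true_of_mem (by simpa using hmax), Finset.card_insert_of_notMem ha]
        at this
    rw [Finset.card_insert_of_notMem ha, Finset.sum_insert ha]
    nlinarith [ih hs]

/-- for the tree ultrametric `l(u,v) = |leaves(T[u ∨ v])|`
(with `l(v,v) = 0`), every `U ⊆ V` and `v ∈ U` satisfy
`∑_{u ∈ U} l(u,v) ≥ (|U|² - 1)/2`. -/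
theorem tree_ultrametric_spreading {α : Type} [DecidableEq α]
    (T : HCTree α) (hT : T.proper)
    (U : Finset α) (hU : U ⊆ T.leaves) (v : α) (hv : v ∈ U) :
    ((U.card : ℝ) ^ 2 - 1) / 2
      ≤ ∑ u ∈ U, (if u = v then (0 : ℝ) else ((T.cluster u v).card : ℝ)) := by
  set S := U.erase v
  have hsum : ∑ u ∈ U, (if u = v then (0 : ℝ) else ((T.cluster u v).card : ℝ))
      = ∑ u ∈ S, ((T.cluster u v).card : ℝ) := by
    rw [← Finset.sum_erase_add U _ hv, if_pos rfl, add_zero]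
    exact Finset.sum_congr rfl fun u hu => if_neg (Finset.ne_of_mem_erase hu)
  have hspread : (S.card : ℝ) * (S.card + 3) ≤ 2 * ∑ u ∈ S, ((T.cluster u v).card : ℝ) := by
    exact_mod_cast S.card_mul_card_add_three_le_two_mul_sum _ fun _ hu =>
      HCTree.card_filter_card_cluster_le_lt hT ((U.erase_subset v).trans hU) (hU hv)
        (U.notMem_erase v) hu
  have hcard : (U.card : ℝ) = S.card + 1 := by
    rw [Finset.card_erase_of_mem hv, Nat.cast_sub (Finset.card_pos.mpr ⟨v, hv⟩)]; ring
  rw [hsum, hcard]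
  nlinarith
end
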